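/- Let g, h : ℝⁿ → ℝ ∪ {∞} be proper closed (lower semicontinuous) convex functions. If ȳ is an optimal solution of the dual problem min_{y ∈ dom h*} [h*(y) − g*(y)], then every x ∈ ∂g*(ȳ) is an optimal solution of the primal DC program min_{x ∈ dom g} [g(x) − h(x)]. -/

import Mathlib

open Matrix Set

def ConvexERealFn {n : ℕ} (f : (Fin n → ℝ) → EReal) : Prop :=
  ∀ x y : Fin n → ℝ, ∀ a b : ℝ, 0 ≤ a → 0 ≤ b → a + b = 1 →
    f (a • x + b • y) ≤ (a : EReal) * f x + (b : EReal) * f y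

noncomputable def conjFn {n : ℕ} (f : (Fin n → ℝ) → EReal) (y : Fin n → ℝ) : EReal :=
  ⨆ x : Fin n → ℝ, (((y ⬝ᵥ x : ℝ) : EReal) - f x)

def subdiffFn {n : ℕ} (f : (Fin n → ℝ) → EReal) (xb : Fin n → ℝ) : Set (Fin n → ℝ) :=
  {y | f xb ≠ ⊤ ∧ ∀ x, f xb + ((y ⬝ᵥ (x - xb) : ℝ) : EReal) ≤ f x}

/-! Closedness and convexity give `f ≤ f**`: separate `(x₀, r)` with `r < f x₀` from the closed
convex epigraph.
For `x ∈ ∂g*(ȳ)` this yields `g x ≤ g** x ≤ ⟪ȳ, x⟫ - g*(ȳ)`, while Fenchel–Young gives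
`⟪ȳ, x⟫ - h*(ȳ) ≤ h x`, so `g x - h x ≤ h*(ȳ) - g*(ȳ)`. Conversely, on `dom h*` dual optimality and
Fenchel–Young for `g` give `h*(y) ≥ ⟪y, z⟫ - g z + (h*(ȳ) - g*(ȳ))`, hence
`h z ≤ h** z ≤ g z - (h*(ȳ) - g*(ȳ))`. -/

lemma isClosed_realEpigraph {α : Type*} [TopologicalSpace α] {f : α → EReal}
    (hf : LowerSemicontinuous f) : IsClosed {p : α × ℝ | f p.1 ≤ p.2} :=
  hf.isClosed_epigraph.preimage <|
    continuous_fst.prodMk (continuous_coe_real_ereal.comp continuous_snd)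

variable {n : ℕ}

lemma exists_dotProduct_add_mul_lt {S : Set ((Fin n → ℝ) × ℝ)} (hconv : Convex ℝ S)
    (hclosed : IsClosed S) {p : (Fin n → ℝ) × ℝ} (hp : p ∉ S) :
    ∃ (y : Fin n → ℝ) (β u : ℝ),
      (∀ q ∈ S, y ⬝ᵥ q.1 + β * q.2 < u) ∧ u < y ⬝ᵥ p.1 + β * p.2 := by
  obtain ⟨φ, u, hS, hpu⟩ := geometric_hahn_banach_closed_point hconv hclosed hp
  set y := (dotProductEquiv ℝ (Fin n)).symm (φ.toLinearMap ∘ₗ LinearMap.inl ℝ _ ℝ)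
  have hφ (q : (Fin n → ℝ) × ℝ) : φ q = y ⬝ᵥ q.1 + φ (0, 1) * q.2 := by
    have hy : y ⬝ᵥ q.1 = φ (q.1, 0) := by
      change dotProductEquiv ℝ (Fin n) y q.1 = _
      rw [LinearEquiv.apply_symm_apply]
      rfl
    rw [hy, mul_comm, ← smul_eq_mul, ← φ.map_smul, ← φ.map_add]
    simp
  exact ⟨y, φ (0, 1), u, fun q hq => hφ q ▸ hS q hq, hφ p ▸ hpu⟩

lemma convex_realEpigraph {f : (Fin n → ℝ) → EReal} (hf : ConvexERealFn f) :
    Convex ℝ {p : (Fin n → ℝ) × ℝ | f p.1 ≤ p.2} := by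
  rintro ⟨v, t⟩ hvt ⟨w, s⟩ hws a b ha hb hab
  calc f (a • v + b • w) ≤ a * f v + b * f w := hf v w a b ha hb hab
    _ ≤ a * t + b * s := add_le_add (mul_le_mul_of_nonneg_left hvt (by exact_mod_cast ha))
        (mul_le_mul_of_nonneg_left hws (by exact_mod_cast hb))
    _ = ((a • (v, t) + b • (w, s) : (Fin n → ℝ) × ℝ).2 : EReal) := by simp

def IsAffineMinorant (f : (Fin n → ℝ) → EReal) (y : Fin n → ℝ) (c : ℝ) : Prop :=
  ∀ v, ((y ⬝ᵥ v - c : ℝ) : EReal) ≤ f v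

lemma le_conjFn (f : (Fin n → ℝ) → EReal) (y x : Fin n → ℝ) :
    ((y ⬝ᵥ x : ℝ) : EReal) - f x ≤ conjFn f y :=
  le_iSup (fun x => ((y ⬝ᵥ x : ℝ) : EReal) - f x) x

lemma conjFn_le_of_isAffineMinorant {f : (Fin n → ℝ) → EReal} {y : Fin n → ℝ} {c : ℝ}
    (h : IsAffineMinorant f y c) : conjFn f y ≤ c :=
  iSup_le fun v => EReal.sub_le_of_le_add' <|
    (EReal.sub_le_iff_le_add (.inl (EReal.coe_ne_bot c)) (.inl (EReal.coe_ne_top c))).1 <| by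
      exact_mod_cast h v

lemma conjFn_ne_bot {f : (Fin n → ℝ) → EReal} (hf : ∃ x, f x ≠ ⊤) (y : Fin n → ℝ) :
    conjFn f y ≠ ⊥ := by
  obtain ⟨x, hx⟩ := hf
  refine ne_bot_of_le_ne_bot ?_ (le_conjFn f y x)
  simp [sub_eq_add_neg, hx]

section Separation

variable {f : (Fin n → ℝ) → EReal} {y : Fin n → ℝ} {β u : ℝ}

lemma exists_separation_of_lt (hf : ConvexERealFn f) (hlsc : LowerSemicontinuous f)
    {x₀ : Fin n → ℝ} {r : ℝ} (hr : (r : EReal) < f x₀) :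
    ∃ (y : Fin n → ℝ) (β u : ℝ),
      (∀ v (t : ℝ), f v ≤ t → y ⬝ᵥ v + β * t < u) ∧ u < y ⬝ᵥ x₀ + β * r :=
  let ⟨y, β, u, hS, hp⟩ := exists_dotProduct_add_mul_lt (convex_realEpigraph hf)
    (isClosed_realEpigraph hlsc) (p := (x₀, r)) (not_le.2 hr)
  ⟨y, β, u, fun v t h => hS (v, t) h, hp⟩

lemma nonpos_of_separation (hsep : ∀ v (t : ℝ), f v ≤ t → y ⬝ᵥ v + β * t < u)
    {v : Fin n → ℝ} (hv : f v ≠ ⊤) : β ≤ 0 := by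
  by_contra! hβ
  set t := max (f v).toReal ((u - y ⬝ᵥ v) / β)
  have hlt := hsep v t ((EReal.le_coe_toReal hv).trans (by exact_mod_cast le_max_left _ _))
  have : u - y ⬝ᵥ v ≤ β * t := (div_le_iff₀' hβ).1 (le_max_right _ _)
  linarith

lemma isAffineMinorant_of_separation (hβ : β < 0)
    (hsep : ∀ v (t : ℝ), f v ≤ t → y ⬝ᵥ v + β * t < u) :
    IsAffineMinorant f ((-β)⁻¹ • y) ((-β)⁻¹ * u) := by
  intro v
  refine EReal.le_of_forall_lt_iff_le.1 fun t ht => ?_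
  have := hsep v t ht.le
  rw [smul_dotProduct, smul_eq_mul, ← mul_sub, EReal.coe_le_coe_iff, inv_mul_le_iff₀ (neg_pos.2 hβ)]
  exact_mod_cast (by linarith : _ ≤ _)

lemma IsAffineMinorant.add_smul {y₀ : Fin n → ℝ} {c₀ : ℝ} (h₀ : IsAffineMinorant f y₀ c₀)
    (hy : ∀ v, f v ≠ ⊤ → y ⬝ᵥ v ≤ u) {l : ℝ} (hl : 0 ≤ l) :
    IsAffineMinorant f (y₀ + l • y) (c₀ + l * u) := by
  intro v
  rcases eq_or_ne (f v) ⊤ with hv | hv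
  · simp [hv]
  refine le_trans ?_ (h₀ v)
  have := mul_le_mul_of_nonneg_left (hy v hv) hl
  rw [add_dotProduct, smul_dotProduct, smul_eq_mul]
  exact_mod_cast (by linarith : _ ≤ _)

end Separation

section FenchelMoreau

variable {f : (Fin n → ℝ) → EReal}

lemma exists_isAffineMinorant (hf : ConvexERealFn f) (hlsc : LowerSemicontinuous f)
    (hbot : ∀ x, f x ≠ ⊥) (hproper : ∃ x, f x ≠ ⊤) : ∃ y c, IsAffineMinorant f y c := by
  obtain ⟨x, hx⟩ := hproper
  obtain ⟨s, hs⟩ : ∃ s : ℝ, f x = s := ⟨_, (EReal.coe_toReal hx (hbot x)).symm⟩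
  obtain ⟨y, β, u, hsep, hu⟩ :=
    exists_separation_of_lt hf hlsc (x₀ := x) (r := s - 1) (by rw [hs]; exact_mod_cast sub_one_lt s)
  have := hsep x s hs.le
  exact ⟨_, _, isAffineMinorant_of_separation (by linarith) hsep⟩

lemma exists_isAffineMinorant_lt (hf : ConvexERealFn f) (hlsc : LowerSemicontinuous f)
    (hbot : ∀ x, f x ≠ ⊥) (hproper : ∃ x, f x ≠ ⊤) {x₀ : Fin n → ℝ} {r : ℝ}
    (hr : (r : EReal) < f x₀) :
    ∃ y c, IsAffineMinorant f y c ∧ r < y ⬝ᵥ x₀ - c := by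
  obtain ⟨y, β, u, hsep, hu⟩ := exists_separation_of_lt hf hlsc hr
  obtain ⟨x, hx⟩ := hproper
  rcases (nonpos_of_separation hsep hx).lt_or_eq with hβ | rfl
  · refine ⟨_, _, isAffineMinorant_of_separation hβ hsep, ?_⟩
    rw [smul_dotProduct, smul_eq_mul, ← mul_sub, lt_inv_mul_iff₀ (neg_pos.2 hβ)]
    linarith
  -- a vertical separating hyperplane tilts an arbitrary affine minorant up at `x₀`
  obtain ⟨y₀, c₀, h₀⟩ := exists_isAffineMinorant hf hlsc hbot ⟨x, hx⟩
  have hd : 0 < y ⬝ᵥ x₀ - u := by linarith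
  set l := (|r - (y₀ ⬝ᵥ x₀ - c₀)| + 1) / (y ⬝ᵥ x₀ - u)
  have hl : l * (y ⬝ᵥ x₀ - u) = |r - (y₀ ⬝ᵥ x₀ - c₀)| + 1 := div_mul_cancel₀ _ hd.ne'
  refine ⟨_, _, h₀.add_smul (y := y) (u := u) (fun v hv => ?_) (by positivity : 0 ≤ l), ?_⟩
  · have := hsep v _ (EReal.le_coe_toReal hv)
    linarith
  · rw [add_dotProduct, smul_dotProduct, smul_eq_mul]
    linarith [le_abs_self (r - (y₀ ⬝ᵥ x₀ - c₀))]

lemma le_conjFn_conjFn (hf : ConvexERealFn f) (hlsc : LowerSemicontinuous f)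
    (hbot : ∀ x, f x ≠ ⊥) (hproper : ∃ x, f x ≠ ⊤) (x₀ : Fin n → ℝ) :
    f x₀ ≤ conjFn (conjFn f) x₀ := by
  refine EReal.ge_of_forall_gt_iff_ge.1 fun r hr => ?_
  obtain ⟨y, c, hyc, hr'⟩ := exists_isAffineMinorant_lt hf hlsc hbot hproper hr
  calc (r : EReal) ≤ ((x₀ ⬝ᵥ y - c : ℝ) : EReal) := by rw [dotProduct_comm]; exact_mod_cast hr'.le
    _ ≤ ((x₀ ⬝ᵥ y : ℝ) : EReal) - conjFn f y := by
        rw [EReal.coe_sub]; exact EReal.sub_le_sub le_rfl (conjFn_le_of_isAffineMinorant hyc)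
    _ ≤ conjFn (conjFn f) x₀ := le_conjFn _ _ _

end FenchelMoreau

lemma conjFn_le_of_mem_subdiffFn {φ : (Fin n → ℝ) → EReal} {yb x : Fin n → ℝ}
    (hx : x ∈ subdiffFn φ yb) : conjFn φ x ≤ ((x ⬝ᵥ yb : ℝ) : EReal) - φ yb := by
  obtain ⟨hne, hsub⟩ := hx
  induction hφ : φ yb with
  | bot => simp
  | top => exact absurd hφ hne
  | coe a =>
    refine iSup_le fun w => EReal.sub_le_of_le_add' ?_
    have h := add_le_add_left (hφ ▸ hsub w) ((x ⬝ᵥ yb - a : ℝ) : EReal)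
    rw [← EReal.coe_sub]
    convert h using 1
    norm_cast
    rw [dotProduct_sub]
    ring

lemma conjFn_conjFn_le_of_forall_le_sub {φ ψ : (Fin n → ℝ) → EReal} {δ s : ℝ} {z : Fin n → ℝ}
    (hδ : ∀ y, conjFn ψ y ≠ ⊤ → (δ : EReal) ≤ conjFn ψ y - conjFn φ y) (hz : φ z = s) :
    conjFn (conjFn ψ) z ≤ ((s - δ : ℝ) : EReal) := by
  refine iSup_le fun y => ?_
  rcases eq_or_ne (conjFn ψ y) ⊤ with hy | hy
  · simp [hy]
  have hφ : ((y ⬝ᵥ z - s : ℝ) : EReal) ≤ conjFn φ y := by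
    simpa [hz] using le_conjFn φ y z
  have hψ : ((δ + (y ⬝ᵥ z - s) : ℝ) : EReal) ≤ conjFn ψ y := by
    rw [EReal.coe_add]
    exact (add_le_add_right hφ _).trans (EReal.add_le_of_le_sub (hδ y hy))
  calc ((z ⬝ᵥ y : ℝ) : EReal) - conjFn ψ y
        ≤ ((z ⬝ᵥ y : ℝ) : EReal) - ((δ + (y ⬝ᵥ z - s) : ℝ) : EReal) := EReal.sub_le_sub le_rfl hψ
    _ = ((s - δ : ℝ) : EReal) := by rw [← EReal.coe_sub, dotProduct_comm]; ring_nf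

theorem stmt7_general {n : ℕ} (g h : (Fin n → ℝ) → EReal)
    (hg : ConvexERealFn g) (hh : ConvexERealFn h)
    (hgbot : ∀ x, g x ≠ ⊥) (hhbot : ∀ x, h x ≠ ⊥)
    (hgproper : ∃ x, g x ≠ ⊤)
    (hgc : LowerSemicontinuous g) (hhc : LowerSemicontinuous h)
    (yb : Fin n → ℝ)
    (hopt : conjFn h yb ≠ ⊤ ∧
      ∀ z, conjFn h z ≠ ⊤ → conjFn h yb - conjFn g yb ≤ conjFn h z - conjFn g z)
    (x : Fin n → ℝ) (hx : x ∈ subdiffFn (conjFn g) yb) :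
    g x ≠ ⊤ ∧ ∀ z, g z ≠ ⊤ → g x - h x ≤ g z - h z := by
  obtain ⟨a, ha⟩ : ∃ a : ℝ, conjFn g yb = a :=
    ⟨_, (EReal.coe_toReal hx.1 (conjFn_ne_bot hgproper yb)).symm⟩
  have hgx : g x ≤ ((yb ⬝ᵥ x - a : ℝ) : EReal) := by
    refine (le_conjFn_conjFn hg hgc hgbot hgproper x).trans ?_
    simpa [ha, dotProduct_comm] using conjFn_le_of_mem_subdiffFn hx
  refine ⟨ne_top_of_le_ne_top (EReal.coe_ne_top _) hgx, fun z hz => ?_⟩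
  rcases eq_or_ne (h x) ⊤ with hhx_top | hhx_top
  · simp [hhx_top]
  obtain ⟨b, hb⟩ : ∃ b : ℝ, conjFn h yb = b :=
    ⟨_, (EReal.coe_toReal hopt.1 (conjFn_ne_bot ⟨x, hhx_top⟩ yb)).symm⟩
  obtain ⟨s, hs⟩ : ∃ s : ℝ, g z = s := ⟨_, (EReal.coe_toReal hz (hgbot z)).symm⟩
  have hhz : h z ≤ ((s - (b - a) : ℝ) : EReal) :=
    (le_conjFn_conjFn hh hhc hhbot ⟨x, hhx_top⟩ z).trans <|
      conjFn_conjFn_le_of_forall_le_sub (fun y hy => by simpa [ha, hb] using hopt.2 y hy) hs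
  have hhx : ((yb ⬝ᵥ x - b : ℝ) : EReal) ≤ h x := by
    rw [EReal.coe_sub]
    refine EReal.sub_le_of_le_add' ((EReal.sub_le_iff_le_add ?_ ?_).1 (hb ▸ le_conjFn h yb x))
    · exact .inr (EReal.coe_ne_top b)
    · exact .inr (EReal.coe_ne_bot b)
  calc g x - h x ≤ ((yb ⬝ᵥ x - a : ℝ) : EReal) - ((yb ⬝ᵥ x - b : ℝ) : EReal) :=
        EReal.sub_le_sub hgx hhx
    _ = ((s - (s - (b - a)) : ℝ) : EReal) := by norm_cast; ring
    _ ≤ g z - h z := by rw [hs, EReal.coe_sub]; exact EReal.sub_le_sub le_rfl hhz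

/-- Toland–Singer duality (ii): for proper closed convex `g, h`, if `ȳ` solves the dual
`min_{y ∈ dom h*} [h* − g*]`, then every `x ∈ ∂g*(ȳ)` solves the primal DC program
`min_{x ∈ dom g} [g − h]`. -/
theorem stmt7 {n : ℕ} (g h : (Fin n → ℝ) → EReal)
    (hg : ConvexERealFn g) (hh : ConvexERealFn h)
    (hgbot : ∀ x, g x ≠ ⊥) (hhbot : ∀ x, h x ≠ ⊥)
    (hgproper : ∃ x, g x ≠ ⊤) (hhproper : ∃ x, h x ≠ ⊤)
    (hgc : LowerSemicontinuous g) (hhc : LowerSemicontinuous h)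
    (yb : Fin n → ℝ)
    (hopt : conjFn h yb ≠ ⊤ ∧
      ∀ z, conjFn h z ≠ ⊤ → conjFn h yb - conjFn g yb ≤ conjFn h z - conjFn g z)
    (x : Fin n → ℝ) (hx : x ∈ subdiffFn (conjFn g) yb) :
    g x ≠ ⊤ ∧ ∀ z, g z ≠ ⊤ → g x - h x ≤ g z - h z :=
  stmt7_general g h hg hh hgbot hhbot hgproper hgc hhc yb hopt x hx
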